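/- For every quantitative MPRS game there exist a memoryless deterministic Nash-equilibrium profile σ̂ = (σ̂^1,...,σ̂^N) and value functions u^m : S → ℝ defined by u^m(s) := Q^m(s, σ̂), which satisfy the equilibrium equations: for every player n and every state s ∈ V_n \ R, the action σ̂^n(s) attains the maximum over out-neighbours a of s of the quantity q^n(s) + γ·u^n(a); and for every pair of players n, m and every state s ∈ V_n \ R, u^m(s) = q^m(s) + γ·u^m(σ̂^n(s)), while for every state s ∈ R ∪ {s̄} and every m, u^m(s) = q^m(s) + γ·u^m(s̄). -/

import Mathlib

/-!
Vertices are decided by a retrograde analysis from the targets. A target is decided at level `0`.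
An undecided vertex `v` is decided at level `ℓ + 1` by moving to a successor decided at level `ℓ`
whose eventual target is good for the owner of `v` (its own target for a reacher, any other one
for an avoider), or, when every successor is decided with a bad target, to one decided last.
Undecided vertices move to undecided successors and never reach a target. Under the resulting
memoryless profile a decided vertex pays `γ ^ level` times the turn payoff of its eventual target,
and a case analysis on the owner's type shows that every owner's move maximises its own
continuation value. Since values are bounded and discounted, this local optimality excludes every
unilateral deviation, history-dependent or not (one-shot deviation principle). The equilibrium
equations are the one-step unfolding of the discounted sum along a memoryless play.
-/

/-- A multi-player reachability/safety (MPRS) game on a finite vertex type `V`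
with `N` players.  `succ v` is the (nonempty) set of out-neighbours of `v`,
`owner v` is the player who moves at `v` (the partition `V = V₁ ∪ ... ∪ V_N`),
`target n` is player `n`'s nonempty target set `R_n`, `reacher n` tells whether
player `n` is a reacher (`true`) or an avoider (`false`), and `gamma` is the
discount factor. -/
structure MPRS (V : Type) [Fintype V] [DecidableEq V] (N : ℕ) where
  succ : V → Finset V
  succ_nonempty : ∀ v, (succ v).Nonempty
  owner : V → Fin N
  target : Fin N → Finset V
  target_nonempty : ∀ n, (target n).Nonempty
  reacher : Fin N → Bool
  gamma : ℝ
  gamma_pos : 0 < gamma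
  gamma_lt_one : gamma < 1

namespace MPRS

/-- A deterministic, possibly history-dependent strategy: given the list of past
states and the current vertex, choose a next vertex.  (`none` is the terminal
state `s̄`; a strategy is only ever consulted at non-target vertices owned by
the player, where it must choose an out-neighbour.) -/
abbrev Strat (V : Type) := List (Option V) → V → V

/-- A strategy is memoryless if it depends only on the current state. -/
def Memoryless {V : Type} (σ : Strat V) : Prop := ∀ h h' v, σ h v = σ h' v

variable {V : Type} [Fintype V] [DecidableEq V] {N : ℕ} (g : MPRS V N)

/-- The total target set `R = R₁ ∪ ... ∪ R_N`. -/
def totalTarget : Finset V := Finset.univ.biUnion g.target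

/-- Validity of a strategy for player `n`: at any history ending in a vertex
`v ∈ V_n \ R`, it chooses an out-neighbour of `v`. -/
def ValidStrat (n : Fin N) (σ : Strat V) : Prop :=
  ∀ (h : List (Option V)) (v : V), g.owner v = n → v ∉ g.totalTarget → σ h v ∈ g.succ v

/-- One step of the deterministic dynamics under profile `σ`, given past
history `h` and current state `s`.  From a target or terminal state the next
state is the terminal state `none`. -/
def step (σ : Fin N → Strat V) (h : List (Option V)) (s : Option V) : Option V :=
  match s with
  | none => none
  | some v => if v ∈ g.totalTarget then none else some (σ (g.owner v) h v)

/-- Auxiliary play function carrying the history. -/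
def playAux (g : MPRS V N) (σ : Fin N → Strat V) : ℕ → List (Option V) → Option V → Option V
  | 0, _, s => s
  | t + 1, h, s => playAux g σ t (h ++ [s]) (g.step σ h s)

/-- The induced play: `play σ s₀ t` is the state `s_t` of the unique play
determined by the profile `σ` and the initial state `s₀`. -/
def play (σ : Fin N → Strat V) (s₀ : Option V) (t : ℕ) : Option V :=
  g.playAux σ t [] s₀

/-- Player `n`'s turn payoff `q^n`. -/
def q (n : Fin N) : Option V → ℝ
  | none => 0
  | some v => if v ∈ g.target n then (if g.reacher n then 1 else -1) else 0

/-- Player `n`'s total quantitative payoff `Q^n(s₀, σ) = ∑ γ^t q^n(s_t)`. -/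
noncomputable def Q (n : Fin N) (s₀ : Option V) (σ : Fin N → Strat V) : ℝ :=
  ∑' t : ℕ, g.gamma ^ t * g.q n (g.play σ s₀ t)

/-- Player `n`'s qualitative payoff `Q̃^n(s₀, σ)`. -/
noncomputable def Qtil (n : Fin N) (s₀ : Option V) (σ : Fin N → Strat V) : ℝ :=
  if 0 < g.Q n s₀ σ then 1 else if g.Q n s₀ σ < 0 then -1 else 0

end MPRS

open Filter Topology

theorem tsum_le_of_add_mul_le {γ B : ℝ} {r w : ℕ → ℝ} (hγ₀ : 0 ≤ γ) (hγ₁ : γ < 1)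
    (hr : Summable fun t => γ ^ t * r t) (hw : ∀ t, |w t| ≤ B)
    (hstep : ∀ t, r t + γ * w (t + 1) ≤ w t) :
    ∑' t, γ ^ t * r t ≤ w 0 := by
  have hpartial : ∀ T, ∑ t ∈ Finset.range T, γ ^ t * r t + γ ^ T * w T ≤ w 0 := by
    intro T
    induction T with
    | zero => simp
    | succ T ih =>
      have := mul_le_mul_of_nonneg_left (hstep T) (pow_nonneg hγ₀ T)
      rw [Finset.sum_range_succ, pow_succ]
      linarith
  have htail : Tendsto (fun T => γ ^ T * w T) atTop (𝓝 0) := by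
    refine squeeze_zero_norm (fun T => ?_)
      (by simpa using (tendsto_pow_atTop_nhds_zero_of_lt_one hγ₀ hγ₁).mul_const B)
    rw [norm_mul, norm_pow, Real.norm_of_nonneg hγ₀, Real.norm_eq_abs]
    exact mul_le_mul_of_nonneg_left (hw T) (pow_nonneg hγ₀ T)
  simpa using le_of_tendsto' (hr.hasSum.tendsto_sum_nat.add htail) hpartial

namespace MPRS

variable {V : Type} [Fintype V] [DecidableEq V] {N : ℕ} (g : MPRS V N)

theorem abs_q_le_one (n : Fin N) (s : Option V) : |g.q n s| ≤ 1 := by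
  rcases s with _ | v
  · simp [q]
  · simp only [q]; split_ifs <;> norm_num

theorem q_nonneg_of_reacher {n : Fin N} (hn : g.reacher n = true) (s : Option V) :
    0 ≤ g.q n s := by
  rcases s with _ | v
  · simp [q]
  · simp only [q]; split_ifs <;> simp_all

theorem q_nonpos_of_avoider {n : Fin N} (hn : g.reacher n = false) (s : Option V) :
    g.q n s ≤ 0 := by
  rcases s with _ | v
  · simp [q]
  · simp only [q]; split_ifs <;> simp_all

theorem q_some_of_notMem_totalTarget {v : V} (hv : v ∉ g.totalTarget) (n : Fin N) :
    g.q n (some v) = 0 :=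
  if_neg fun hn => hv (Finset.mem_biUnion.mpr ⟨n, Finset.mem_univ n, hn⟩)

theorem summable_discounted_q (n : Fin N) (s : ℕ → Option V) :
    Summable fun t => g.gamma ^ t * g.q n (s t) := by
  refine Summable.of_norm_bounded (g := fun t => g.gamma ^ t) (summable_geometric_of_lt_one g.gamma_pos.le g.gamma_lt_one)
    fun t => ?_
  rw [norm_mul, norm_pow, Real.norm_of_nonneg g.gamma_pos.le, Real.norm_eq_abs]
  exact mul_le_of_le_one_right (pow_nonneg g.gamma_pos.le t) (g.abs_q_le_one n (s t))

theorem abs_Q_le (n : Fin N) (s₀ : Option V) (σ : Fin N → Strat V) :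
    |g.Q n s₀ σ| ≤ (1 - g.gamma)⁻¹ := by
  rw [← Real.norm_eq_abs, Q]
  refine tsum_of_norm_bounded (hasSum_geometric_of_lt_one g.gamma_pos.le g.gamma_lt_one)
    fun t => ?_
  rw [norm_mul, norm_pow, Real.norm_of_nonneg g.gamma_pos.le, Real.norm_eq_abs]
  exact mul_le_of_le_one_right (pow_nonneg g.gamma_pos.le t) (g.abs_q_le_one n _)

theorem Q_nonneg_of_reacher {n : Fin N} (hn : g.reacher n = true) (s₀ : Option V)
    (σ : Fin N → Strat V) : 0 ≤ g.Q n s₀ σ :=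
  tsum_nonneg fun t => mul_nonneg (pow_nonneg g.gamma_pos.le t) (g.q_nonneg_of_reacher hn _)

theorem Q_nonpos_of_avoider {n : Fin N} (hn : g.reacher n = false) (s₀ : Option V)
    (σ : Fin N → Strat V) : g.Q n s₀ σ ≤ 0 :=
  tsum_nonpos fun t =>
    mul_nonpos_of_nonneg_of_nonpos (pow_nonneg g.gamma_pos.le t) (g.q_nonpos_of_avoider hn _)

theorem playAux_none (σ : Fin N → Strat V) (t : ℕ) (h : List (Option V)) :
    g.playAux σ t h none = none := by
  induction t generalizing h with
  | zero => rfl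
  | succ t ih => exact ih _

theorem Q_none (n : Fin N) (σ : Fin N → Strat V) : g.Q n none σ = 0 := by
  simp [Q, play, playAux_none, q]

theorem exists_playAux_succ_eq_step (σ : Fin N → Strat V) (t : ℕ) (h : List (Option V))
    (s : Option V) : ∃ h', g.playAux σ (t + 1) h s = g.step σ h' (g.playAux σ t h s) := by
  induction t generalizing h s with
  | zero => exact ⟨h, rfl⟩
  | succ t ih => exact ih (h ++ [s]) (g.step σ h s)

theorem exists_play_succ_eq_step (σ : Fin N → Strat V) (s₀ : Option V) (t : ℕ) :
    ∃ h, g.play σ s₀ (t + 1) = g.step σ h (g.play σ s₀ t) :=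
  g.exists_playAux_succ_eq_step σ t [] s₀

section Memoryless

variable {σ : Fin N → Strat V} (hσ : ∀ n, Memoryless (σ n))
include hσ

theorem step_eq_step_nil (h : List (Option V)) (s : Option V) : g.step σ h s = g.step σ [] s := by
  rcases s with _ | v
  · rfl
  · simp only [step]; rw [hσ (g.owner v) h [] v]

theorem playAux_history_irrel (t : ℕ) (h h' : List (Option V)) (s : Option V) :
    g.playAux σ t h s = g.playAux σ t h' s := by
  induction t generalizing h h' s with
  | zero => rfl
  | succ t ih =>
    simp only [playAux]
    rw [g.step_eq_step_nil hσ h, g.step_eq_step_nil hσ h']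
    exact ih _ _ _

theorem play_succ_of_memoryless (s : Option V) (t : ℕ) :
    g.play σ s (t + 1) = g.play σ (g.step σ [] s) t :=
  g.playAux_history_irrel hσ t [s] [] _

theorem Q_eq_q_add_of_memoryless (n : Fin N) (s : Option V) :
    g.Q n s σ = g.q n s + g.gamma * g.Q n (g.step σ [] s) σ := by
  rw [Q, (g.summable_discounted_q n _).tsum_eq_zero_add, Q, ← tsum_mul_left]
  simp only [pow_zero, one_mul, pow_succ, g.play_succ_of_memoryless hσ]
  congr 1
  exact tsum_congr fun t => by ring

end Memoryless

section OneShotDeviation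

variable {σ : Fin N → Strat V} (hσ : ∀ m, Memoryless (σ m)) {n : Fin N}
  (hopt : ∀ v, g.owner v = n → v ∉ g.totalTarget →
    ∀ a ∈ g.succ v, g.Q n (some a) σ ≤ g.Q n (some (σ n [] v)) σ)
include hσ hopt

theorem q_add_mul_Q_step_update_le {σn : Strat V} (hσn : g.ValidStrat n σn)
    (h : List (Option V)) (s : Option V) :
    g.q n s + g.gamma * g.Q n (g.step (Function.update σ n σn) h s) σ ≤ g.Q n s σ := by
  rw [g.Q_eq_q_add_of_memoryless hσ n s]
  refine add_le_add_right (mul_le_mul_of_nonneg_left ?_ g.gamma_pos.le) _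
  rcases s with _ | v
  · rfl
  by_cases hv : v ∈ g.totalTarget
  · simp [step, hv]
  simp only [step, hv, if_false]
  by_cases hown : g.owner v = n
  · subst hown
    rw [Function.update_self]
    exact hopt v rfl hv _ (hσn h v rfl hv)
  · rw [Function.update_of_ne hown, hσ (g.owner v) h [] v]

theorem Q_update_le {σn : Strat V} (hσn : g.ValidStrat n σn) (s₀ : Option V) :
    g.Q n s₀ (Function.update σ n σn) ≤ g.Q n s₀ σ :=
  tsum_le_of_add_mul_le (w := fun t => g.Q n (g.play (Function.update σ n σn) s₀ t) σ)
    g.gamma_pos.le g.gamma_lt_one (g.summable_discounted_q n _)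
    (fun t => g.abs_Q_le n _ σ) fun t => by
      obtain ⟨h, hstep⟩ := g.exists_play_succ_eq_step (Function.update σ n σn) s₀ t
      rw [hstep]
      exact g.q_add_mul_Q_step_update_le hσ hopt hσn h _

end OneShotDeviation

def IsGood (n : Fin N) (τ : V) : Prop := τ ∈ g.target n ↔ g.reacher n = true

instance (n : Fin N) (τ : V) : Decidable (g.IsGood n τ) :=
  inferInstanceAs (Decidable (_ ↔ _))

/-- `v` is decided at `level`: the equilibrium play from `v` moves to `next` and reaches the
target `endpoint` after `level` steps (for a target, `next = endpoint = v`). -/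
structure Record (V : Type) where
  level : ℕ
  next : V
  endpoint : V

def Admissible (s : V → Option (Record V)) (ℓ : ℕ) (v : V) (r : Record V) : Prop :=
  r.level = ℓ + 1 ∧ r.next ∈ g.succ v ∧
    (∃ rn, s r.next = some rn ∧ rn.level = ℓ ∧ rn.endpoint = r.endpoint) ∧
    (g.IsGood (g.owner v) r.endpoint ∨
      ∀ b ∈ g.succ v, ∃ rb, s b = some rb ∧ ¬ g.IsGood (g.owner v) rb.endpoint)

open Classical in
noncomputable def extend (s : V → Option (Record V)) (ℓ : ℕ) (v : V) : Option (Record V) :=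
  match s v with
  | some r => some r
  | none => if h : ∃ r, g.Admissible s ℓ v r then some h.choose else none

noncomputable def stage : ℕ → V → Option (Record V)
  | 0 => fun v => if v ∈ g.totalTarget then some ⟨0, v, v⟩ else none
  | ℓ + 1 => g.extend (stage ℓ) ℓ

variable {g}

theorem stage_succ_of_some {ℓ : ℕ} {v : V} {r : Record V} (h : g.stage ℓ v = some r) :
    g.stage (ℓ + 1) v = some r := by
  simp [stage, extend, h]

theorem stage_mono {ℓ ℓ' : ℕ} {v : V} {r : Record V} (hle : ℓ ≤ ℓ') (h : g.stage ℓ v = some r) :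
    g.stage ℓ' v = some r := by
  induction ℓ', hle using Nat.le_induction with
  | base => exact h
  | succ k _ ih => exact stage_succ_of_some ih

theorem admissible_of_stage_succ {ℓ : ℕ} {v : V} {r : Record V} (hnone : g.stage ℓ v = none)
    (h : g.stage (ℓ + 1) v = some r) : g.Admissible (g.stage ℓ) ℓ v r := by
  simp only [stage, extend, hnone] at h
  split_ifs at h with hex
  obtain rfl := Option.some_inj.mp h
  exact hex.choose_spec

theorem stage_level {ℓ : ℕ} {v : V} {r : Record V} (h : g.stage ℓ v = some r) :
    r.level ≤ ℓ ∧ g.stage r.level v = some r := by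
  induction ℓ with
  | zero =>
    have hr : v ∈ g.totalTarget ∧ ⟨0, v, v⟩ = r := by simpa [stage] using h
    rw [← hr.2]
    exact ⟨le_rfl, h ▸ hr.2 ▸ rfl⟩
  | succ ℓ ih =>
    cases hv : g.stage ℓ v with
    | some r' =>
      obtain rfl : r' = r := Option.some_inj.mp ((stage_succ_of_some hv).symm.trans h)
      exact ⟨(ih hv).1.trans ℓ.le_succ, (ih hv).2⟩
    | none =>
      have hlevel := (admissible_of_stage_succ hv h).1
      exact ⟨hlevel.le, hlevel ▸ h⟩

theorem exists_stage_succ_of_admissible {ℓ : ℕ} {v : V} {r : Record V}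
    (h : g.Admissible (g.stage ℓ) ℓ v r) : ∃ r', g.stage (ℓ + 1) v = some r' ∧ r'.level ≤ ℓ + 1 := by
  cases hv : g.stage ℓ v with
  | some r' => exact ⟨r', stage_succ_of_some hv, (stage_level hv).1.trans ℓ.le_succ⟩
  | none =>
    have hex : ∃ r, g.Admissible (g.stage ℓ) ℓ v r := ⟨r, h⟩
    exact ⟨hex.choose, by simp [stage, extend, hv, hex], hex.choose_spec.1.le⟩

theorem exists_admissible_of_stage {ℓ : ℕ} {v : V} {r : Record V} (hv : v ∉ g.totalTarget)
    (h : g.stage ℓ v = some r) : ∃ j, g.Admissible (g.stage j) j v r := by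
  obtain ⟨-, hr⟩ := stage_level h
  cases hl : r.level with
  | zero => simp [hl, stage, hv] at hr
  | succ j =>
    rw [hl] at hr
    have hnone : g.stage j v = none := by
      cases hj : g.stage j v with
      | none => rfl
      | some r' =>
        obtain rfl : r' = r := Option.some_inj.mp ((stage_succ_of_some hj).symm.trans hr)
        have := (stage_level hj).1
        omega
    exact ⟨j, admissible_of_stage_succ hnone hr⟩

variable (g) in
open Classical in
noncomputable def outcome (v : V) : Option (Record V) :=
  if h : ∃ ℓ, (g.stage ℓ v).isSome then g.stage (Nat.find h) v else none

theorem outcome_eq_some_iff {v : V} {r : Record V} :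
    g.outcome v = some r ↔ ∃ ℓ, g.stage ℓ v = some r := by
  classical
  constructor
  · intro h
    simp only [outcome] at h
    split_ifs at h
    exact ⟨_, h⟩
  · rintro ⟨ℓ, hℓ⟩
    have hex : ∃ ℓ, (g.stage ℓ v).isSome := ⟨ℓ, by simp [hℓ]⟩
    obtain ⟨r', hr'⟩ := Option.isSome_iff_exists.mp (Nat.find_spec hex)
    have := stage_mono (Nat.find_min' hex (show (g.stage ℓ v).isSome by simp [hℓ])) hr'
    rw [hℓ] at this
    simp only [outcome, dif_pos hex, hr', this]

theorem outcome_of_stage {ℓ : ℕ} {v : V} {r : Record V} (h : g.stage ℓ v = some r) :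
    g.outcome v = some r :=
  outcome_eq_some_iff.mpr ⟨ℓ, h⟩

theorem stage_level_of_outcome {v : V} {r : Record V} (h : g.outcome v = some r) :
    g.stage r.level v = some r :=
  let ⟨_, hℓ⟩ := outcome_eq_some_iff.mp h
  (stage_level hℓ).2

theorem outcome_of_mem {v : V} (hv : v ∈ g.totalTarget) : g.outcome v = some ⟨0, v, v⟩ :=
  outcome_of_stage (ℓ := 0) (by simp [stage, hv])

theorem notMem_totalTarget_of_outcome_eq_none {v : V} (h : g.outcome v = none) :
    v ∉ g.totalTarget := fun hv => by simp [outcome_of_mem hv] at h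

section NonTarget

variable {v : V} {r : Record V} (hv : v ∉ g.totalTarget) (h : g.outcome v = some r)
include hv h

theorem next_mem_succ_of_outcome : r.next ∈ g.succ v :=
  let ⟨_, hadm⟩ := exists_admissible_of_stage hv (stage_level_of_outcome h)
  hadm.2.1

theorem outcome_next :
    ∃ rn, g.outcome r.next = some rn ∧ r.level = rn.level + 1 ∧ rn.endpoint = r.endpoint := by
  obtain ⟨j, hlevel, -, ⟨rn, hrn, hj, hend⟩, -⟩ :=
    exists_admissible_of_stage hv (stage_level_of_outcome h)
  exact ⟨rn, outcome_of_stage hrn, hj ▸ hlevel, hend⟩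

theorem isGood_or_forall_not_isGood :
    g.IsGood (g.owner v) r.endpoint ∨ ∀ b ∈ g.succ v, ∃ rb, g.outcome b = some rb ∧
      rb.level < r.level ∧ ¬ g.IsGood (g.owner v) rb.endpoint := by
  obtain ⟨j, hlevel, -, -, hgood | hbad⟩ :=
    exists_admissible_of_stage hv (stage_level_of_outcome h)
  · exact Or.inl hgood
  · refine Or.inr fun b hb => ?_
    obtain ⟨rb, hrb, hng⟩ := hbad b hb
    exact ⟨rb, outcome_of_stage hrb, hlevel ▸ Nat.lt_succ_of_le (stage_level hrb).1, hng⟩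

end NonTarget

theorem exists_outcome_level_le_of_isGood {v a : V} {ra : Record V} (ha : a ∈ g.succ v) (hra : g.outcome a = some ra) (hg : g.IsGood (g.owner v) ra.endpoint) :
    ∃ rv, g.outcome v = some rv ∧ rv.level ≤ ra.level + 1 :=
  let ⟨r', hr', hle⟩ := exists_stage_succ_of_admissible (r := ⟨ra.level + 1, a, ra.endpoint⟩)
    ⟨rfl, ha, ⟨ra, stage_level_of_outcome hra, rfl, rfl⟩, Or.inl hg⟩
  ⟨r', outcome_of_stage hr', hle⟩

theorem exists_succ_outcome_eq_none {v : V} (hnone : g.outcome v = none) :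
    ∃ a ∈ g.succ v, g.outcome a = none := by
  by_contra! hall
  have hgood : ∀ b ∈ g.succ v, ∀ rb, g.outcome b = some rb → ¬ g.IsGood (g.owner v) rb.endpoint :=
    fun b hb rb hrb hg => by
      obtain ⟨rv, hrv, -⟩ := exists_outcome_level_le_of_isGood hb hrb hg
      simp [hnone] at hrv
  obtain ⟨a, ha, hmax⟩ := (g.succ v).exists_max_image
    (fun b => ((g.outcome b).map Record.level).getD 0) (g.succ_nonempty v)
  obtain ⟨ra, hra⟩ := Option.ne_none_iff_exists'.mp (hall a ha)
  have hbad : ∀ b ∈ g.succ v, ∃ rb, g.stage ra.level b = some rb ∧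
      ¬ g.IsGood (g.owner v) rb.endpoint := by
    intro b hb
    obtain ⟨rb, hrb⟩ := Option.ne_none_iff_exists'.mp (hall b hb)
    have hle : rb.level ≤ ra.level := by simpa [hra, hrb] using hmax b hb
    exact ⟨rb, stage_mono hle (stage_level_of_outcome hrb), hgood b hb rb hrb⟩
  obtain ⟨r', hr', -⟩ := exists_stage_succ_of_admissible (r := ⟨ra.level + 1, a, ra.endpoint⟩)
    ⟨rfl, ha, ⟨ra, stage_level_of_outcome hra, rfl, rfl⟩, Or.inr hbad⟩
  simp [outcome_of_stage hr'] at hnone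

theorem q_some_of_reacher {n : Fin N} (hn : g.reacher n = true) (τ : V) :
    g.q n (some τ) = if g.IsGood n τ then 1 else 0 := by
  by_cases hτ : τ ∈ g.target n <;> simp [q, IsGood, hn, hτ]

theorem q_some_of_avoider {n : Fin N} (hn : g.reacher n = false) (τ : V) :
    g.q n (some τ) = if g.IsGood n τ then 0 else -1 := by
  by_cases hτ : τ ∈ g.target n <;> simp [q, IsGood, hn, hτ]

variable (g) in
open Classical in
noncomputable def choice (v : V) : V :=
  match g.outcome v with
  | some r => r.next
  | none =>
    if h : ∃ a ∈ g.succ v, g.outcome a = none then h.choose else (g.succ_nonempty v).choose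

theorem choice_of_outcome_eq_some {v : V} {r : Record V} (h : g.outcome v = some r) :
    g.choice v = r.next := by
  simp [choice, h]

theorem outcome_choice_of_outcome_eq_none {v : V} (h : g.outcome v = none) :
    g.choice v ∈ g.succ v ∧ g.outcome (g.choice v) = none := by
  have hex := exists_succ_outcome_eq_none h
  simpa [choice, h, hex] using hex.choose_spec

theorem choice_mem_succ {v : V} (hv : v ∉ g.totalTarget) : g.choice v ∈ g.succ v := by
  cases h : g.outcome v with
  | none => exact (outcome_choice_of_outcome_eq_none h).1
  | some r => exact choice_of_outcome_eq_some h ▸ next_mem_succ_of_outcome hv h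

variable (g) in
noncomputable def equilibrium : Fin N → Strat V := fun _ _ v => g.choice v

theorem equilibrium_memoryless (n : Fin N) : Memoryless (g.equilibrium n) :=
  fun _ _ _ => rfl

theorem Q_equilibrium_of_mem (m : Fin N) {v : V} (hv : v ∈ g.totalTarget) :
    g.Q m (some v) g.equilibrium = g.q m (some v) := by
  rw [g.Q_eq_q_add_of_memoryless equilibrium_memoryless]
  simp [step, hv, Q_none]

theorem Q_equilibrium_of_notMem (m : Fin N) {v : V} (hv : v ∉ g.totalTarget) :
    g.Q m (some v) g.equilibrium = g.gamma * g.Q m (some (g.choice v)) g.equilibrium := by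
  rw [g.Q_eq_q_add_of_memoryless equilibrium_memoryless]
  simp [step, hv, q_some_of_notMem_totalTarget, equilibrium]

theorem Q_equilibrium_of_outcome_eq_some (m : Fin N) {v : V} {r : Record V}
    (h : g.outcome v = some r) :
    g.Q m (some v) g.equilibrium = g.gamma ^ r.level * g.q m (some r.endpoint) := by
  induction hl : r.level generalizing v r with
  | zero =>
    by_cases hv : v ∈ g.totalTarget
    · obtain rfl : r = ⟨0, v, v⟩ := Option.some_inj.mp (h.symm.trans (outcome_of_mem hv))
      simp [Q_equilibrium_of_mem m hv]
    · obtain ⟨rn, -, hlevel, -⟩ := outcome_next hv h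
      omega
  | succ j ih =>
    have hv : v ∉ g.totalTarget := fun hv => by
      obtain rfl : r = ⟨0, v, v⟩ := Option.some_inj.mp (h.symm.trans (outcome_of_mem hv))
      simp at hl
    obtain ⟨rn, hrn, hlevel, hend⟩ := outcome_next hv h
    rw [Q_equilibrium_of_notMem m hv, choice_of_outcome_eq_some h, ih hrn (by omega), hend,
      pow_succ]
    ring

theorem Q_equilibrium_of_outcome_eq_none (m : Fin N) {v : V} (h : g.outcome v = none) :
    g.Q m (some v) g.equilibrium = 0 := by
  have hplay : ∀ t (v : V), g.outcome v = none →
      ∃ w, g.play g.equilibrium (some v) t = some w ∧ g.outcome w = none := by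
    intro t
    induction t with
    | zero => exact fun v hv => ⟨v, rfl, hv⟩
    | succ t ih =>
      intro v hv
      rw [g.play_succ_of_memoryless equilibrium_memoryless]
      simp only [step, notMem_totalTarget_of_outcome_eq_none hv, if_false]
      exact ih _ (outcome_choice_of_outcome_eq_none hv).2
  refine (tsum_congr fun t => ?_).trans tsum_zero
  obtain ⟨w, hw, hwnone⟩ := hplay t v h
  rw [hw, g.q_some_of_notMem_totalTarget (notMem_totalTarget_of_outcome_eq_none hwnone), mul_zero]

theorem Q_equilibrium_le_choice_of_avoider {v a : V} (hv : v ∉ g.totalTarget)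
    (ha : a ∈ g.succ v) (hn : g.reacher (g.owner v) = false) :
    g.Q (g.owner v) (some a) g.equilibrium ≤ g.Q (g.owner v) (some (g.choice v)) g.equilibrium := by
  by_cases hbad : ∃ rv, g.outcome v = some rv ∧ ¬ g.IsGood (g.owner v) rv.endpoint
  · obtain ⟨rv, hrv, hng⟩ := hbad
    obtain ⟨rn, hrn, hlevel, hend⟩ := outcome_next hv hrv
    obtain ⟨rb, hrb, hlt, hbng⟩ := (isGood_or_forall_not_isGood hv hrv).resolve_left hng a ha
    rw [choice_of_outcome_eq_some hrv, Q_equilibrium_of_outcome_eq_some _ hrn,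
      Q_equilibrium_of_outcome_eq_some _ hrb, q_some_of_avoider hn, q_some_of_avoider hn, hend,
      if_neg hng, if_neg hbng, mul_neg_one, mul_neg_one, neg_le_neg_iff]
    exact pow_le_pow_of_le_one g.gamma_pos.le g.gamma_lt_one.le (by omega)
  · suffices g.Q (g.owner v) (some (g.choice v)) g.equilibrium = 0 from
      this ▸ g.Q_nonpos_of_avoider hn _ _
    cases hrv : g.outcome v with
    | none => exact Q_equilibrium_of_outcome_eq_none _ (outcome_choice_of_outcome_eq_none hrv).2
    | some rv =>
      have hgood : g.IsGood (g.owner v) rv.endpoint := not_not.mp fun hng => hbad ⟨rv, hrv, hng⟩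
      obtain ⟨rn, hrn, -, hend⟩ := outcome_next hv hrv
      rw [choice_of_outcome_eq_some hrv, Q_equilibrium_of_outcome_eq_some _ hrn,
        q_some_of_avoider hn, hend, if_pos hgood, mul_zero]

theorem Q_equilibrium_le_choice_of_reacher {v a : V} (hv : v ∉ g.totalTarget)
    (ha : a ∈ g.succ v) (hn : g.reacher (g.owner v) = true) :
    g.Q (g.owner v) (some a) g.equilibrium ≤ g.Q (g.owner v) (some (g.choice v)) g.equilibrium := by
  by_cases hgood : ∃ ra, g.outcome a = some ra ∧ g.IsGood (g.owner v) ra.endpoint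
  · obtain ⟨ra, hra, hg⟩ := hgood
    obtain ⟨rv, hrv, hle⟩ := exists_outcome_level_le_of_isGood ha hra hg
    have hgv : g.IsGood (g.owner v) rv.endpoint :=
      (isGood_or_forall_not_isGood hv hrv).resolve_right fun hall => by
        obtain ⟨rb, hrb, -, hng⟩ := hall a ha
        exact hng (Option.some_inj.mp (hra.symm.trans hrb) ▸ hg)
    obtain ⟨rn, hrn, hlevel, hend⟩ := outcome_next hv hrv
    rw [choice_of_outcome_eq_some hrv, Q_equilibrium_of_outcome_eq_some _ hrn,
      Q_equilibrium_of_outcome_eq_some _ hra, q_some_of_reacher hn, q_some_of_reacher hn, hend,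
      if_pos hg, if_pos hgv, mul_one, mul_one]
    exact pow_le_pow_of_le_one g.gamma_pos.le g.gamma_lt_one.le (by omega)
  · suffices g.Q (g.owner v) (some a) g.equilibrium = 0 from
      this ▸ g.Q_nonneg_of_reacher hn _ _
    cases hra : g.outcome a with
    | none => exact Q_equilibrium_of_outcome_eq_none _ hra
    | some ra =>
      rw [Q_equilibrium_of_outcome_eq_some _ hra, q_some_of_reacher hn,
        if_neg fun hg => hgood ⟨ra, hra, hg⟩, mul_zero]

theorem Q_equilibrium_le_choice {v a : V} (hv : v ∉ g.totalTarget) (ha : a ∈ g.succ v) :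
    g.Q (g.owner v) (some a) g.equilibrium ≤ g.Q (g.owner v) (some (g.choice v)) g.equilibrium := by
  cases hn : g.reacher (g.owner v)
  · exact Q_equilibrium_le_choice_of_avoider hv ha hn
  · exact Q_equilibrium_le_choice_of_reacher hv ha hn

end MPRS

/-- Every quantitative MPRS game has a deterministic memoryless Nash
equilibrium `σ̂` whose value functions `u^m(s) := Q^m(s, σ̂)` satisfy the
equilibrium (optimality) equations. -/
theorem quantitative_MPRS_NE_optimality_equations
    {V : Type} [Fintype V] [DecidableEq V] {N : ℕ} (g : MPRS V N) :
    ∃ σhat : Fin N → MPRS.Strat V,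
      (∀ n, g.ValidStrat n (σhat n)) ∧
      (∀ n, MPRS.Memoryless (σhat n)) ∧
      (∀ (n : Fin N) (s₀ : Option V) (σn : MPRS.Strat V), g.ValidStrat n σn →
        g.Q n s₀ (Function.update σhat n σn) ≤ g.Q n s₀ σhat) ∧
      (let u : Fin N → Option V → ℝ := fun m s => g.Q m s σhat
       -- for `s ∈ Vₙ \ R`, the action `σ̂ⁿ(s)` attains the maximum of
       -- `qⁿ(s) + γ·uⁿ(a)` over out-neighbours `a` of `s`:
       (∀ (n : Fin N) (v : V), g.owner v = n → v ∉ g.totalTarget →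
          ∀ a ∈ g.succ v,
            g.q n (some v) + g.gamma * u n (some a) ≤
              g.q n (some v) + g.gamma * u n (some (σhat n [] v))) ∧
       -- for all `n, m` and `s ∈ Vₙ \ R` : `uᵐ(s) = qᵐ(s) + γ·uᵐ(σ̂ⁿ(s))` :
       (∀ (n m : Fin N) (v : V), g.owner v = n → v ∉ g.totalTarget →
          u m (some v) = g.q m (some v) + g.gamma * u m (some (σhat n [] v))) ∧
       -- for `s ∈ R ∪ {s̄}` and all `m` : `uᵐ(s) = qᵐ(s) + γ·uᵐ(s̄)` :
       (∀ (m : Fin N) (v : V), v ∈ g.totalTarget →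
          u m (some v) = g.q m (some v) + g.gamma * u m none) ∧
       (∀ m : Fin N, u m none = g.q m none + g.gamma * u m none)) := by
  have hopt : ∀ n v, g.owner v = n → v ∉ g.totalTarget → ∀ a ∈ g.succ v,
      g.Q n (some a) g.equilibrium ≤ g.Q n (some (g.equilibrium n [] v)) g.equilibrium :=
    fun n v hown hv a ha => hown ▸ MPRS.Q_equilibrium_le_choice hv ha
  refine ⟨g.equilibrium, fun n _ v _ hv => MPRS.choice_mem_succ hv,
    MPRS.equilibrium_memoryless, fun n s₀ σn hσn =>
      g.Q_update_le MPRS.equilibrium_memoryless (hopt n) hσn s₀, ?_⟩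
  refine ⟨fun n v hown hv a ha => ?_, fun n m v hown hv => ?_, fun m v hv => ?_, fun m => ?_⟩
  · exact add_le_add_right (mul_le_mul_of_nonneg_left (hopt n v hown hv a ha) g.gamma_pos.le) _
  · rw [g.q_some_of_notMem_totalTarget hv, zero_add]
    exact hown ▸ MPRS.Q_equilibrium_of_notMem m hv
  · beta_reduce
    rw [g.Q_none, mul_zero, add_zero]
    exact MPRS.Q_equilibrium_of_mem m hv
  · simp [g.Q_none, MPRS.q]
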